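/- arXiv:1401.0969 — 5 statements merged into one kernel-verified Lean document; each statement's English description precedes it below -/
import Mathlib

section
/- In any DPL structure satisfying conditions I.1, I.2, I.3, for every atom γ of the Boolean term algebra over the finite vocabulary Δ₀ (modulo Boolean axioms and a₁ ⊔ ... ⊔ aₙ = U), the interpretation I(γ) contains at most one event; i.e., atomic action terms denote at most one event. -/
/-- Boolean action terms over a set `A` of primitive actions. -/
inductive ActTerm (A : Type) : Type
  | prim  : A → ActTerm A
  | meet  : ActTerm A → ActTerm A → ActTerm A
  | join  : ActTerm A → ActTerm A → ActTerm A
  | compl : ActTerm A → ActTerm A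
  | empty : ActTerm A
  | univ  : ActTerm A

/-- Formulae of the deontic action logic DPL over primitive actions `A`
    and propositional variables `P`. -/
inductive Form (A P : Type) : Type
  | prop  : P → Form A P
  | neg   : Form A P → Form A P
  | imp   : Form A P → Form A P → Form A P
  | box   : ActTerm A → Form A P → Form A P
  | sperm : ActTerm A → Form A P            -- strong permission P(α)
  | wperm : ActTerm A → Form A P            -- weak permission Pw(α)
  | eq    : ActTerm A → ActTerm A → Form A P

/-- Diamond `⟨α⟩φ := ¬[α]¬φ`. -/
def Form.dia {A P : Type} (α : ActTerm A) (φ : Form A P) : Form A P :=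
  .neg (.box α (.neg φ))

/-- Conjunction. -/
def Form.and {A P : Type} (φ ψ : Form A P) : Form A P := .neg (.imp φ (.neg ψ))

/-- Disjunction. -/
def Form.or {A P : Type} (φ ψ : Form A P) : Form A P := .imp (.neg φ) ψ

/-- Biconditional. -/
def Form.iff {A P : Type} (φ ψ : Form A P) : Form A P := (φ.imp ψ).and (ψ.imp φ)

/-- DPL structures over the vocabulary `⟨A, P⟩` (def. 1 of the paper):
worlds, events, a deterministic event-labeled transition relation,
a permission relation and an interpretation satisfying I.1, I.2, I.3. -/
structure DPLStruct (A P : Type) where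
  W : Type
  E : Type
  nonemptyE : Nonempty E
  R : W → W → E → Prop
  det : ∀ w w' w'' e, R w w' e → R w w'' e → w' = w''
  Perm : W → E → Prop
  Iprop : P → Set W
  Iact : A → Set E
  I1 : ∀ a : A, (Iact a \ ⋃ (b : A) (_ : b ≠ a), Iact b).Subsingleton
  I2 : ∀ (e : E) (a b : A), a ≠ b → e ∈ Iact a → e ∈ Iact b →
        (⋂ (c : A) (_ : e ∈ Iact c), Iact c) = {e}
  I3 : (⋃ a : A, Iact a) = Set.univ

/-- Interpretation of action terms as sets of events. -/
def ActTerm.interp {A P : Type} (M : DPLStruct A P) : ActTerm A → Set M.E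
  | .prim a => M.Iact a
  | .meet α β => α.interp M ∩ β.interp M
  | .join α β => α.interp M ∪ β.interp M
  | .compl α => (α.interp M)ᶜ
  | .empty => ∅
  | .univ => Set.univ

/-- Satisfaction of DPL formulae at a world of a structure. -/
def Sat {A P : Type} (M : DPLStruct A P) : M.W → Form A P → Prop
  | w, .prop p => w ∈ M.Iprop p
  | w, .neg φ => ¬ Sat M w φ
  | w, .imp φ ψ => Sat M w φ → Sat M w ψ
  | w, .box α φ => ∀ e ∈ α.interp M, ∀ w', M.R w w' e → Sat M w' φ
  | w, .sperm α => ∀ e ∈ α.interp M, M.Perm w e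
  | w, .wperm α => ∃ e ∈ α.interp M, M.Perm w e
  | w, .eq α β => α.interp M = β.interp M

/-- The join `a₁ ⊔ ... ⊔ aₙ` of all primitive actions. -/
def bigJoinAll (n : ℕ) : ActTerm (Fin n) :=
  (List.finRange n).foldr (fun i t => .join (.prim i) t) .empty

/-- Equational provability from the Boolean algebra axioms together with
    the extra equation `a₁ ⊔ ... ⊔ aₙ = U`. -/
inductive BAeq (n : ℕ) : ActTerm (Fin n) → ActTerm (Fin n) → Prop
  | refl (α) : BAeq n α α
  | symm {α β} : BAeq n α β → BAeq n β α
  | trans {α β γ} : BAeq n α β → BAeq n β γ → BAeq n α γ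
  | congr_join {α α' β β'} : BAeq n α α' → BAeq n β β' →
      BAeq n (.join α β) (.join α' β')
  | congr_meet {α α' β β'} : BAeq n α α' → BAeq n β β' →
      BAeq n (.meet α β) (.meet α' β')
  | congr_compl {α α'} : BAeq n α α' → BAeq n (.compl α) (.compl α')
  | join_comm (α β) : BAeq n (.join α β) (.join β α)
  | meet_comm (α β) : BAeq n (.meet α β) (.meet β α)
  | join_assoc (α β γ) : BAeq n (.join (.join α β) γ) (.join α (.join β γ))
  | meet_assoc (α β γ) : BAeq n (.meet (.meet α β) γ) (.meet α (.meet β γ))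
  | absorb_join (α β) : BAeq n (.join α (.meet α β)) α
  | absorb_meet (α β) : BAeq n (.meet α (.join α β)) α
  | distrib_meet (α β γ) :
      BAeq n (.meet α (.join β γ)) (.join (.meet α β) (.meet α γ))
  | distrib_join (α β γ) :
      BAeq n (.join α (.meet β γ)) (.meet (.join α β) (.join α γ))
  | compl_join (α) : BAeq n (.join α (.compl α)) .univ
  | compl_meet (α) : BAeq n (.meet α (.compl α)) .empty
  | join_empty (α) : BAeq n (.join α .empty) α
  | meet_univ (α) : BAeq n (.meet α .univ) α
  | cover : BAeq n (bigJoinAll n) .univ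

/-- The order `α ⊑ β` of the quotient Boolean algebra of terms. -/
def BAle (n : ℕ) (α β : ActTerm (Fin n)) : Prop := BAeq n (.join α β) β

/-- `γ` is an atom of the quotient Boolean algebra of terms: it is nonzero
    and every element below it is zero or equal to it. -/
def IsAtomT (n : ℕ) (γ : ActTerm (Fin n)) : Prop :=
  ¬ BAeq n γ .empty ∧ ∀ β, BAle n β γ → BAeq n β .empty ∨ BAeq n β γ

open Classical

/-- Join of a list of primitive actions. -/
def joinList {n : ℕ} (l : List (Fin n)) : ActTerm (Fin n) :=
  l.foldr (fun i t => .join (.prim i) t) .empty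

/-- Meet of a list of primitive actions. -/
def meetList {n : ℕ} (l : List (Fin n)) : ActTerm (Fin n) :=
  l.foldr (fun i t => .meet (.prim i) t) .univ

lemma joinList_interp {n : ℕ} {P : Type} (M : DPLStruct (Fin n) P)
    (l : List (Fin n)) :
    (joinList l).interp M = {e | ∃ i ∈ l, e ∈ M.Iact i} := by
  induction l with
  | nil => ext e; simp [joinList, ActTerm.interp]
  | cons a l ih =>
    have hstep : (joinList (a :: l)).interp M
        = M.Iact a ∪ (joinList l).interp M := rfl
    rw [hstep, ih]
    ext e
    simp [List.mem_cons]

lemma meetList_interp {n : ℕ} {P : Type} (M : DPLStruct (Fin n) P)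
    (l : List (Fin n)) :
    (meetList l).interp M = {e | ∀ i ∈ l, e ∈ M.Iact i} := by
  induction l with
  | nil => ext e; simp [meetList, ActTerm.interp]
  | cons a l ih =>
    have hstep : (meetList (a :: l)).interp M
        = M.Iact a ∩ (meetList l).interp M := rfl
    rw [hstep, ih]
    ext e
    simp [List.mem_cons]

lemma BAeq_interp {n : ℕ} {P : Type} (M : DPLStruct (Fin n) P)
    {α β : ActTerm (Fin n)} (h : BAeq n α β) : α.interp M = β.interp M := by
  induction h with
  | refl => rfl
  | symm _ ih => exact ih.symm
  | trans _ _ ih1 ih2 => exact ih1.trans ih2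
  | congr_join _ _ ih1 ih2 => show _ ∪ _ = _ ∪ _; rw [ih1, ih2]
  | congr_meet _ _ ih1 ih2 => show _ ∩ _ = _ ∩ _; rw [ih1, ih2]
  | congr_compl _ ih => show _ᶜ = _ᶜ; rw [ih]
  | join_comm α β => ext e; simp [ActTerm.interp]; tauto
  | meet_comm α β => ext e; simp [ActTerm.interp]; tauto
  | join_assoc α β γ => ext e; simp [ActTerm.interp]; tauto
  | meet_assoc α β γ => ext e; simp [ActTerm.interp]; tauto
  | absorb_join α β => ext e; simp [ActTerm.interp]; tauto
  | absorb_meet α β => ext e; simp [ActTerm.interp]; tauto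
  | distrib_meet α β γ => ext e; simp [ActTerm.interp]; tauto
  | distrib_join α β γ => ext e; simp [ActTerm.interp]; tauto
  | compl_join α => ext e; simp [ActTerm.interp]
  | compl_meet α => ext e; simp [ActTerm.interp]
  | join_empty α => ext e; simp [ActTerm.interp]
  | meet_univ α => ext e; simp [ActTerm.interp]
  | cover =>
    show (joinList (List.finRange n)).interp M = Set.univ
    rw [joinList_interp]
    ext e
    simp only [Set.mem_univ, iff_true, Set.mem_setOf_eq]
    have : e ∈ (⋃ a : Fin n, M.Iact a) := by rw [M.I3]; trivial
    obtain ⟨a, ha⟩ := Set.mem_iUnion.mp this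
    exact ⟨a, List.mem_finRange a, ha⟩

lemma BAle_meet_left {n : ℕ} (α γ : ActTerm (Fin n)) :
    BAle n (.meet α γ) γ := by
  have h1 : BAeq n (.join (.meet α γ) γ) (.join γ (.meet γ α)) :=
    (BAeq.join_comm _ _).trans
      (BAeq.congr_join (BAeq.refl γ) (BAeq.meet_comm α γ))
  exact h1.trans (BAeq.absorb_join γ α)

/-- In any DPL structure (satisfying I.1, I.2, I.3), every atom of the Boolean
term algebra over the finite vocabulary `Fin n` (modulo the Boolean axioms and
`a₁ ⊔ ... ⊔ aₙ = U`) denotes at most one event. -/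
theorem atom_denotes_at_most_one_event {n : ℕ} {P : Type}
    (M : DPLStruct (Fin n) P) (γ : ActTerm (Fin n)) (h : IsAtomT n γ) :
    (γ.interp M).Subsingleton := by
  intro x hx y hy
  -- Find a term δ with x ∈ I(δ) and I(δ) ⊆ {x}.
  have hδ : ∃ δ : ActTerm (Fin n), x ∈ δ.interp M ∧ δ.interp M ⊆ {x} := by
    have hxuniv : x ∈ (⋃ a : Fin n, M.Iact a) := by rw [M.I3]; trivial
    obtain ⟨a, ha⟩ := Set.mem_iUnion.mp hxuniv
    by_cases hb : ∃ b, b ≠ a ∧ x ∈ M.Iact b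
    · -- x belongs to at least two primitive actions: use I2
      obtain ⟨b, hba, hb⟩ := hb
      refine ⟨meetList ((List.finRange n).filter
        (fun c => decide (x ∈ M.Iact c))), ?_, ?_⟩
      · rw [meetList_interp]
        intro i hi
        simp only [List.mem_filter, decide_eq_true_eq] at hi
        exact hi.2
      · intro e he
        rw [meetList_interp] at he
        have h2 := M.I2 x a b (Ne.symm hba) ha hb
        have : e ∈ (⋂ (c : Fin n) (_ : x ∈ M.Iact c), M.Iact c) := by
          simp only [Set.mem_iInter]
          intro c hc
          exact he c (by simp [List.mem_filter, List.mem_finRange, hc])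
        rw [h2] at this
        exact this
    · -- x belongs only to a: use I1
      push_neg at hb
      refine ⟨.meet (.prim a) (.compl (joinList
        ((List.finRange n).filter (fun b => decide (b ≠ a))))), ?_, ?_⟩
      · refine ⟨ha, ?_⟩
        show x ∉ (joinList _).interp M
        rw [joinList_interp]
        rintro ⟨i, hi, hxi⟩
        simp only [List.mem_filter, decide_eq_true_eq] at hi
        exact (hb i hi.2 hxi).elim
      · intro e he
        obtain ⟨hea, hec⟩ := he
        have hxd : x ∈ (M.Iact a \ ⋃ (b : Fin n) (_ : b ≠ a), M.Iact b) := by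
          refine ⟨ha, ?_⟩
          simp only [Set.mem_iUnion, not_exists]
          exact hb
        have hed : e ∈ (M.Iact a \ ⋃ (b : Fin n) (_ : b ≠ a), M.Iact b) := by
          refine ⟨hea, ?_⟩
          simp only [Set.mem_iUnion, not_exists]
          intro b hba hbe
          apply hec
          rw [joinList_interp]
          exact ⟨b, by simp [List.mem_filter, List.mem_finRange, hba], hbe⟩
        exact M.I1 a hed hxd
  obtain ⟨δ, hxδ, hδsub⟩ := hδ
  rcases h.2 (.meet δ γ) (BAle_meet_left δ γ) with h0 | heq
  · exfalso
    have := BAeq_interp M h0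
    have hmem : x ∈ (ActTerm.meet δ γ).interp M := ⟨hxδ, hx⟩
    rw [this] at hmem
    exact hmem
  · have hIγ : γ.interp M ⊆ {x} := by
      rw [← BAeq_interp M heq]
      intro z hz
      exact hδsub hz.1
    have := hIγ hy
    simp only [Set.mem_singleton_iff] at this
    exact (this ▸ rfl : x = y)
end

section
/- Unraveling property: if a DPL formula φ is satisfied at world w of a DPL structure M, then there exists a DPL structure M' whose underlying labeled graph is a tree rooted at a world w' (no cycles, unique path from the root to each world), such that w', M' ⊨ φ. -/
/-- Finite labeled paths: `ReachPath M w v l` means `l` is a path of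
labeled transitions from `w` to `v` in `M`. -/
inductive ReachPath {A P : Type} (M : DPLStruct A P) : M.W → M.W → List (M.E × M.W) → Prop
  | nil (w : M.W) : ReachPath M w w []
  | cons {w v u : M.W} {e : M.E} {l : List (M.E × M.W)} :
      M.R w v e → ReachPath M v u l → ReachPath M w u ((e, v) :: l)

/-- `M` is a tree rooted at `r`: every world is reached from `r` by a
unique finite path (hence there are no cycles). -/
def IsTreeRooted {A P : Type} (M : DPLStruct A P) (r : M.W) : Prop :=
  ∀ v : M.W, ∃! l : List (M.E × M.W), ReachPath M r v l

/-! The unraveling of `M` at `w` has as worlds the finite paths from `w`, a transition appending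
one step of `M`. The endpoint map is a bounded morphism onto `M`, so it preserves every formula;
and since each transition extends the path by exactly one step, a path is reached from the root
only through its own prefixes, which makes the unraveling a tree. -/

theorem ReachPath.append {A P : Type} {M : DPLStruct A P} {u v x : M.W}
    {l l' : List (M.E × M.W)} (h : ReachPath M u v l) (h' : ReachPath M v x l') :
    ReachPath M u x (l ++ l') := by
  induction h with
  | nil => exact h'
  | cons hr _ ih => exact .cons hr (ih h')

namespace DPLStruct

variable {A P : Type}

@[ext]
structure PathFrom (M : DPLStruct A P) (w : M.W) where
  last : M.W
  steps : List (M.E × M.W)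
  reachPath : ReachPath M w last steps

def unravel (M : DPLStruct A P) (w : M.W) : DPLStruct A P where
  W := PathFrom M w
  E := M.E
  nonemptyE := M.nonemptyE
  R x y e := M.R x.last y.last e ∧ y.steps = x.steps ++ [(e, y.last)]
  det := by
    rintro x y z e ⟨hy, hy_steps⟩ ⟨hz, hz_steps⟩
    have hlast : y.last = z.last := M.det _ _ _ _ hy hz
    exact PathFrom.ext hlast (by rw [hy_steps, hz_steps, hlast])
  Perm x e := M.Perm x.last e
  Iprop p := {x | x.last ∈ M.Iprop p}
  Iact := M.Iact
  I1 := M.I1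
  I2 := M.I2
  I3 := M.I3

def unravelRoot (M : DPLStruct A P) (w : M.W) : (unravel M w).W := ⟨w, [], .nil w⟩

variable {M : DPLStruct A P} {w : M.W}

def PathFrom.extend (x : PathFrom M w) {v : M.W} {e : M.E} (h : M.R x.last v e) :
    PathFrom M w :=
  ⟨v, x.steps ++ [(e, v)], x.reachPath.append (.cons h (.nil v))⟩

theorem interp_unravel (α : ActTerm A) : α.interp (unravel M w) = α.interp M := by
  induction α with
  | prim a => rfl
  | meet α β ihα ihβ => exact congrArg₂ (· ∩ ·) ihα ihβ
  | join α β ihα ihβ => exact congrArg₂ (· ∪ ·) ihα ihβ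
  | compl α ih => exact congrArg compl ih
  | empty => rfl
  | univ => rfl

theorem sat_unravel (φ : Form A P) (x : (unravel M w).W) :
    Sat (unravel M w) x φ ↔ Sat M x.last φ := by
  induction φ generalizing x with
  | prop p => rfl
  | neg φ ih => exact not_congr (ih x)
  | imp φ ψ ihφ ihψ => exact imp_congr (ihφ x) (ihψ x)
  | box α φ ih =>
    constructor
    · intro hbox e he v hv
      exact (ih _).1 (hbox e (by rwa [interp_unravel]) (x.extend hv) ⟨hv, rfl⟩)
    · rintro hbox e he y ⟨hy, -⟩
      exact (ih y).2 (hbox e (by rwa [interp_unravel] at he) y.last hy)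
  | sperm α | wperm α | eq α β => simp only [Sat, interp_unravel]; rfl

theorem exists_steps_eq_append_of_reachPath_unravel {x y : (unravel M w).W}
    {p : List ((unravel M w).E × (unravel M w).W)} (h : ReachPath (unravel M w) x y p) :
    ∃ s, y.steps = x.steps ++ s ∧ s.length = p.length := by
  induction h with
  | nil => exact ⟨[], by simp, rfl⟩
  | @cons _ u _ e _ hr _ ih =>
    obtain ⟨s, hs, hlen⟩ := ih
    exact ⟨(e, u.last) :: s, by simp [hs, hr.2], by simp [hlen]⟩

theorem reachPath_unravel_unique {x y : (unravel M w).W}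
    {p q : List ((unravel M w).E × (unravel M w).W)}
    (hp : ReachPath (unravel M w) x y p) (hq : ReachPath (unravel M w) x y q) : p = q := by
  induction hp generalizing q with
  | nil =>
    obtain ⟨s, hs, hlen⟩ := exists_steps_eq_append_of_reachPath_unravel hq
    have : s = [] := by simpa using hs.symm
    simpa [this] using hlen.symm
  | @cons x u y e l hr hp ih =>
    cases hq with
    | nil =>
      obtain ⟨s, hs, -⟩ := exists_steps_eq_append_of_reachPath_unravel hp
      have := congrArg List.length (hs.trans (congrArg (· ++ s) hr.2))
      simp at this
    | @cons _ u' _ e' l' hr' hq' =>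
      -- both first steps are prefixes of `y.steps` of the same length
      obtain ⟨s, hs, -⟩ := exists_steps_eq_append_of_reachPath_unravel hp
      obtain ⟨s', hs', -⟩ := exists_steps_eq_append_of_reachPath_unravel hq'
      have hsteps : u.steps = u'.steps := by
        have hlen : u.steps.length = u'.steps.length := by simp [hr.2, hr'.2]
        exact List.append_inj_left (hs.symm.trans hs') hlen
      have hstep := List.head_eq_of_cons_eq <|
        List.append_cancel_left (hr.2.symm.trans (hsteps.trans hr'.2))
      obtain ⟨rfl, hlast⟩ := Prod.mk.inj hstep
      obtain rfl : u = u' := PathFrom.ext hlast hsteps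
      rw [ih hq']

theorem exists_reachPath_unravel {u v : M.W} {l : List (M.E × M.W)} (h : ReachPath M u v l)
    (x : (unravel M w).W) (hx : x.last = u) :
    ∃ y p, y.last = v ∧ y.steps = x.steps ++ l ∧ ReachPath (unravel M w) x y p := by
  induction h generalizing x with
  | nil => exact ⟨x, [], hx, by simp, .nil x⟩
  | cons hr _ ih =>
    subst hx
    obtain ⟨y, p, hy, hy_steps, hp⟩ := ih (x.extend hr) rfl
    exact ⟨y, _ :: p, hy, by simp [hy_steps, PathFrom.extend], .cons ⟨hr, rfl⟩ hp⟩

theorem isTreeRooted_unravel : IsTreeRooted (unravel M w) (unravelRoot M w) := by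
  intro v
  obtain ⟨y, p, hy, hy_steps, hp⟩ := exists_reachPath_unravel v.reachPath (unravelRoot M w) rfl
  obtain rfl : y = v := PathFrom.ext hy (by simpa [unravelRoot] using hy_steps)
  exact ⟨p, hp, fun q hq => reachPath_unravel_unique hq hp⟩

end DPLStruct

/-- Unraveling property: any satisfiable DPL formula is satisfiable at the
root of a tree-shaped DPL structure. -/
theorem unraveling {A P : Type} (M : DPLStruct A P) (w : M.W) (φ : Form A P)
    (h : Sat M w φ) :
    ∃ (M' : DPLStruct A P) (w' : M'.W), IsTreeRooted M' w' ∧ Sat M' w' φ :=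
  ⟨M.unravel w, M.unravelRoot w, DPLStruct.isTreeRooted_unravel,
    (DPLStruct.sat_unravel φ _).2 h⟩
end

section
/- Every DPL formula φ of modal degree ≤ n either is unsatisfiable in all structures over all extensions V' of the vocabulary V, or is equivalent (at every world of every structure over every extension V' ⊇ V) to a finite disjunction of normal form formulae of degree n. -/
/-- Modal degree of a formula (permissions and equations count as degree 0). -/
def Form.deg {A P : Type} : Form A P → ℕ
  | .neg φ => φ.deg
  | .imp φ ψ => max φ.deg ψ.deg
  | .box _ φ => φ.deg + 1
  | _ => 0

/-- Degree-0 literals: propositional variables, deontic predicates,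
and their negations. -/
inductive Lit0 {A P : Type} : Form A P → Prop
  | prop (p : P) : Lit0 (.prop p)
  | negprop (p : P) : Lit0 (.neg (.prop p))
  | sperm (α : ActTerm A) : Lit0 (.sperm α)
  | negsperm (α : ActTerm A) : Lit0 (.neg (.sperm α))
  | wperm (α : ActTerm A) : Lit0 (.wperm α)
  | negwperm (α : ActTerm A) : Lit0 (.neg (.wperm α))

/-- `F₀`: conjunctions of degree-0 literals. -/
inductive NF0 {A P : Type} : Form A P → Prop
  | lit {φ} : Lit0 φ → NF0 φ
  | and {φ ψ} : NF0 φ → NF0 ψ → NF0 (φ.and ψ)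

/-- Auxiliary family: `NFAux false n φ` says `φ ∈ Fₙ` (normal form of degree
`n`); `NFAux true n φ` says `φ` is a conjunction of formulae `⟨α⟩ψ` or
`¬⟨α⟩ψ` with `ψ ∈ Fₙ`. -/
inductive NFAux {A P : Type} : Bool → ℕ → Form A P → Prop
  | zero {φ} : NF0 φ → NFAux false 0 φ
  | dia {n φ} (α : ActTerm A) : NFAux false n φ → NFAux true n (Form.dia α φ)
  | negdia {n φ} (α : ActTerm A) :
      NFAux false n φ → NFAux true n (.neg (Form.dia α φ))
  | conj {n φ ψ} : NFAux true n φ → NFAux true n ψ → NFAux true n (φ.and ψ)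
  | lift {n φ} : NFAux true n φ → NFAux false (n + 1) φ
  | withTheta {n θ φ} : NF0 θ → NFAux true n φ → NFAux false (n + 1) (θ.and φ)

/-- Normal form formulae of degree `n`. -/
def NF {A P : Type} (n : ℕ) (φ : Form A P) : Prop := NFAux false n φ

/-- Renaming of primitive actions along a vocabulary map. -/
def ActTerm.map {A A' : Type} (f : A → A') : ActTerm A → ActTerm A'
  | .prim a => .prim (f a)
  | .meet α β => .meet (α.map f) (β.map f)
  | .join α β => .join (α.map f) (β.map f)
  | .compl α => .compl (α.map f)
  | .empty => .empty
  | .univ => .univ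

/-- Renaming of primitive actions in a formula along a vocabulary map. -/
def Form.map {A A' P : Type} (f : A → A') : Form A P → Form A' P
  | .prop p => .prop p
  | .neg φ => .neg (φ.map f)
  | .imp φ ψ => .imp (φ.map f) (ψ.map f)
  | .box α φ => .box (α.map f) (φ.map f)
  | .sperm α => .sperm (α.map f)
  | .wperm α => .wperm (α.map f)
  | .eq α β => .eq (α.map f) (β.map f)

/-- Negation with simplification of double negations. -/
def Form.simpNeg {A P : Type} : Form A P → Form A P
  | .neg φ => φ
  | φ => .neg φ

/-- The set `SF(φ, k)` of subformulae of a normal form formula at level `k`. -/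
def SF {A P : Type} : Form A P → ℕ → Set (Form A P)
  | .neg (.imp φ (.neg ψ)), k => SF φ k ∪ SF ψ k
  | .neg (.neg (.box α (.neg ψ))), 0 => {.neg (.neg (.box α (.neg ψ)))}
  | .neg (.neg (.box _ (.neg ψ))), k + 1 => Form.simpNeg '' SF ψ k
  | .neg (.box α (.neg ψ)), 0 => {.neg (.box α (.neg ψ))}
  | .neg (.box _ (.neg ψ)), k + 1 => SF ψ k
  | φ, 0 => {φ}
  | _, _ + 1 => ∅

/-- Existential formulae: `Pw(α)`, `¬P(α)` and `⟨α⟩ψ`. -/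
inductive Existential {A P : Type} : Form A P → Prop
  | wperm (α : ActTerm A) : Existential (.wperm α)
  | negsperm (α : ActTerm A) : Existential (.neg (.sperm α))
  | dia (α : ActTerm A) (φ : Form A P) : Existential (Form.dia α φ)

/-- The existential degree `D_∃(φ)`: the maximum, over the levels
`0 ≤ k ≤ d(φ)`, of the number of existential formulae in `SF(φ, k)`. -/
noncomputable def Dexists {A P : Type} (φ : Form A P) : ℕ :=
  (Finset.range (φ.deg + 1)).sup
    fun k => (SF φ k ∩ {ψ | Existential ψ}).ncard

/-- Primitive actions occurring in an action term. -/
def ActTerm.prims {A : Type} [DecidableEq A] : ActTerm A → Finset A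
  | .prim a => {a}
  | .meet α β => α.prims ∪ β.prims
  | .join α β => α.prims ∪ β.prims
  | .compl α => α.prims
  | .empty => ∅
  | .univ => ∅

/-- Primitive actions occurring in a formula (`Pr(φ)`). -/
def Form.prims {A P : Type} [DecidableEq A] : Form A P → Finset A
  | .prop _ => ∅
  | .neg φ => φ.prims
  | .imp φ ψ => φ.prims ∪ ψ.prims
  | .box α φ => α.prims ∪ φ.prims
  | .sperm α => α.prims
  | .wperm α => α.prims
  | .eq α β => α.prims ∪ β.prims

/-- Disjunction of a list of formulae. -/
def bigOr {A P : Type} : List (Form A P) → Form A P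
  | [] => .neg (.eq .empty .empty)
  | [φ] => φ
  | φ :: l => φ.or (bigOr l)
/-!
Read every formula as its meaning `sem φ`, an element of the complete Boolean algebra of
predicates on (renaming, structure, world). By induction on `φ`, both `sem φ` and its complement
are finite nonempty joins of meanings of degree-`n` normal forms. The Boolean connectives are
handled by distributivity, once one knows that the meet of two normal forms is again (equivalent
to) a normal form. Equations `α = β` become `P(γ) ∧ ¬Pw(γ)` for the symmetric difference `γ`,
since an event set is empty iff every and no event in it is permitted. For `[α]φ`, writing
`¬φ ≡ ⋁ ψᵢ` gives `¬[α]φ ≡ ⋁ ⟨α⟩ψᵢ` and `[α]φ ≡ ⋀ ¬⟨α⟩ψᵢ`. A formula of low degree is raised to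
degree `n` by conjoining the valid `¬⟨∅⟩χ`.
-/

namespace DPL

open scoped symmDiff

variable {A P : Type}

abbrev Sem (A P : Type) : Type 1 :=
  ∀ (A' : Type) (_ : A → A') (M : DPLStruct A' P), M.W → Prop

def sem (φ : Form A P) : Sem A P := fun _ f M w => Sat M w (φ.map f)

theorem sem_neg (φ : Form A P) : sem (.neg φ) = (sem φ)ᶜ := rfl

theorem sem_imp (φ ψ : Form A P) : sem (.imp φ ψ) = (sem φ)ᶜ ⊔ sem ψ := by
  funext A' f M w
  exact propext imp_iff_not_or

theorem sem_and (φ ψ : Form A P) : sem (φ.and ψ) = sem φ ⊓ sem ψ := by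
  funext A' f M w
  simp [sem, Form.and, Form.map, Sat]

theorem sem_box_apply (α : ActTerm A) (φ : Form A P) (A' : Type) (f : A → A')
    (M : DPLStruct A' P) (w : M.W) :
    sem (.box α φ) A' f M w ↔ ∀ e ∈ (α.map f).interp M, ∀ w', M.R w w' e → sem φ A' f M w' :=
  Iff.rfl

theorem sem_dia_apply (α : ActTerm A) (φ : Form A P) (A' : Type) (f : A → A')
    (M : DPLStruct A' P) (w : M.W) :
    sem (Form.dia α φ) A' f M w ↔
      ∃ e ∈ (α.map f).interp M, ∃ w', M.R w w' e ∧ sem φ A' f M w' := by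
  simp [Form.dia, sem_neg, sem_box_apply]

theorem biSup_list_apply {ι : Type*} (F : ι → Sem A P) (l : List ι) (A' : Type) (f : A → A')
    (M : DPLStruct A' P) (w : M.W) :
    (⨆ i ∈ l, F i) A' f M w ↔ ∃ i ∈ l, F i A' f M w := by
  simp [iSup_apply]

theorem sem_bigOr (l : List (Form A P)) : sem (bigOr l) = ⨆ ψ ∈ l, sem ψ := by
  induction l with
  | nil => funext A' f M w; simp [sem, bigOr, Form.map, Sat]
  | cons φ l ih =>
    cases l with
    | nil => simp [bigOr]
    | cons ψ l =>
      rw [show bigOr (φ :: ψ :: l) = φ.or (bigOr (ψ :: l)) from rfl, Form.or, sem_imp, sem_neg,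
        compl_compl, ih]
      simp [iSup_or, iSup_sup_eq]

theorem sem_box_of_compl_eq {α : ActTerm A} {φ : Form A P} {l : List (Form A P)}
    (hl : (sem φ)ᶜ = ⨆ ψ ∈ l, sem ψ) :
    sem (.box α φ) = (⨆ ψ ∈ l, sem (Form.dia α ψ))ᶜ := by
  rw [eq_compl_comm, eq_comm]
  funext A' f M w
  have hφ (w' : M.W) : ¬ sem φ A' f M w' ↔ ∃ ψ ∈ l, sem ψ A' f M w' := by
    rw [← biSup_list_apply, ← hl]
    rfl
  apply propext
  simp only [biSup_list_apply, Pi.compl_apply, compl_iff_not, sem_box_apply, sem_dia_apply,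
    not_forall, hφ, exists_prop]
  constructor
  · rintro ⟨e, he, w', hR, ψ, hψ, hsat⟩
    exact ⟨ψ, hψ, e, he, w', hR, hsat⟩
  · rintro ⟨ψ, hψ, e, he, w', hR, hsat⟩
    exact ⟨e, he, w', hR, ψ, hψ, hsat⟩

def _root_.ActTerm.symmDiff (α β : ActTerm A) : ActTerm A :=
  .join (.meet α (.compl β)) (.meet β (.compl α))

theorem interp_symmDiff (M : DPLStruct A P) (α β : ActTerm A) :
    (α.symmDiff β).interp M = α.interp M ∆ β.interp M := rfl

theorem sem_eq (α β : ActTerm A) :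
    sem (.eq α β : Form A P) = sem (.sperm (α.symmDiff β)) ⊓ (sem (.wperm (α.symmDiff β)))ᶜ := by
  funext A' f M w
  apply propext
  change (α.map f).interp M = (β.map f).interp M ↔
    (∀ e ∈ ((α.map f).symmDiff (β.map f)).interp M, M.Perm w e) ∧
      ¬ ∃ e ∈ ((α.map f).symmDiff (β.map f)).interp M, M.Perm w e
  rw [interp_symmDiff, ← symmDiff_eq_bot, Set.bot_eq_empty, Set.eq_empty_iff_forall_notMem]
  exact ⟨fun h => ⟨fun e he => absurd he (h e), fun ⟨e, he, _⟩ => h e he⟩,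
    fun ⟨hall, hnone⟩ e he => hnone ⟨e, he, hall e he⟩⟩

def NFDefinable (n : ℕ) (S : Sem A P) : Prop :=
  ∃ l : List (Form A P), l ≠ [] ∧ (∀ ψ ∈ l, NF n ψ) ∧ S = ⨆ ψ ∈ l, sem ψ

theorem NFDefinable.of_nf {n : ℕ} {ψ : Form A P} (h : NF n ψ) : NFDefinable n (sem ψ) :=
  ⟨[ψ], List.cons_ne_nil _ _, by simpa using h, by simp⟩

theorem NFDefinable.sup {n : ℕ} {S T : Sem A P} (hS : NFDefinable n S) (hT : NFDefinable n T) :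
    NFDefinable n (S ⊔ T) := by
  obtain ⟨l₁, hne, hnf₁, rfl⟩ := hS
  obtain ⟨l₂, -, hnf₂, rfl⟩ := hT
  refine ⟨l₁ ++ l₂, by simp [hne], fun ψ hψ => ?_, by simp [iSup_or, iSup_sup_eq]⟩
  rcases List.mem_append.1 hψ with h | h
  exacts [hnf₁ ψ h, hnf₂ ψ h]

theorem NFDefinable.biSup {ι : Type*} {n : ℕ} {l : List ι} {F : ι → Sem A P} (hl : l ≠ [])
    (h : ∀ i ∈ l, NFDefinable n (F i)) : NFDefinable n (⨆ i ∈ l, F i) := by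
  induction l with
  | nil => exact absurd rfl hl
  | cons i l ih =>
    rcases eq_or_ne l [] with rfl | hl'
    · simpa using h i (by simp)
    · simpa [iSup_or, iSup_sup_eq] using
        (h i (by simp)).sup (ih hl' fun j hj => h j (List.mem_cons_of_mem _ hj))

theorem exists_nf_sem_eq_inf {n : ℕ} {x y : Form A P} (hx : NF n x) (hy : NF n y) :
    ∃ z, NF n z ∧ sem z = sem x ⊓ sem y := by
  cases hx with
  | zero hx => cases hy with
    | zero hy => exact ⟨x.and y, .zero (.and hx hy), sem_and x y⟩
  | lift hx => cases hy with
    | lift hy => exact ⟨x.and y, .lift (.conj hx hy), sem_and x y⟩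
    | @withTheta _ θ y hθ hy =>
      exact ⟨θ.and (x.and y), .withTheta hθ (.conj hx hy), by simp only [sem_and]; ac_rfl⟩
  | @withTheta _ θ x hθ hx => cases hy with
    | lift hy =>
      exact ⟨θ.and (x.and y), .withTheta hθ (.conj hx hy), by simp only [sem_and]; ac_rfl⟩
    | @withTheta _ θ' y hθ' hy =>
      exact ⟨(θ.and θ').and (x.and y), .withTheta (.and hθ hθ') (.conj hx hy),
        by simp only [sem_and]; ac_rfl⟩

theorem NFDefinable.inf {n : ℕ} {S T : Sem A P} (hS : NFDefinable n S) (hT : NFDefinable n T) :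
    NFDefinable n (S ⊓ T) := by
  obtain ⟨l₁, hne₁, hnf₁, rfl⟩ := hS
  obtain ⟨l₂, hne₂, hnf₂, rfl⟩ := hT
  simp only [iSup₂_inf_eq]
  simp only [inf_iSup₂_eq]
  refine .biSup hne₁ fun x hx => .biSup hne₂ fun y hy => ?_
  obtain ⟨z, hz, hsem⟩ := exists_nf_sem_eq_inf (hnf₁ x hx) (hnf₂ y hy)
  exact hsem ▸ .of_nf hz

theorem NFDefinable.biInf {ι : Type*} {n : ℕ} {l : List ι} {F : ι → Sem A P} (hl : l ≠ [])
    (h : ∀ i ∈ l, NFDefinable n (F i)) : NFDefinable n (⨅ i ∈ l, F i) := by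
  induction l with
  | nil => exact absurd rfl hl
  | cons i l ih =>
    rcases eq_or_ne l [] with rfl | hl'
    · simpa using h i (by simp)
    · simpa [iInf_or, iInf_inf_eq] using
        (h i (by simp)).inf (ih hl' fun j hj => h j (List.mem_cons_of_mem _ hj))

theorem NFDefinable.of_nf0 {θ : Form A P} (hθ : NF0 θ) : ∀ n, NFDefinable n (sem θ)
  | 0 => .of_nf (.zero hθ)
  | n + 1 => by
    obtain ⟨l, hne, hnf, -⟩ := NFDefinable.of_nf0 hθ n
    obtain ⟨χ, hχ⟩ := List.exists_mem_of_ne_nil l hne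
    have hvalid : sem (.neg (Form.dia .empty χ)) = ⊤ := by
      funext A' f M w
      simp [sem_neg, sem_dia_apply, ActTerm.map, ActTerm.interp]
    have h := NFDefinable.of_nf (NFAux.withTheta hθ (.negdia .empty (hnf χ hχ)))
    rwa [sem_and, hvalid, inf_top_eq] at h

theorem NFDefinable.of_lit {θ : Form A P} (hθ : Lit0 θ) (n : ℕ) : NFDefinable n (sem θ) :=
  .of_nf0 (.lit hθ) n

theorem NFDefinable.sem_dia_biSup {m : ℕ} {α : ActTerm A} {l : List (Form A P)}
    (hl : l ≠ []) (hnf : ∀ ψ ∈ l, NF m ψ) : NFDefinable (m + 1) (⨆ ψ ∈ l, sem (Form.dia α ψ)) :=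
  .biSup hl fun ψ hψ => .of_nf (.lift (.dia α (hnf ψ hψ)))

theorem NFDefinable.compl_sem_dia_biSup {m : ℕ} {α : ActTerm A} {l : List (Form A P)}
    (hl : l ≠ []) (hnf : ∀ ψ ∈ l, NF m ψ) :
    NFDefinable (m + 1) (⨆ ψ ∈ l, sem (Form.dia α ψ))ᶜ := by
  simp only [compl_iSup]
  exact .biInf hl fun ψ hψ => .of_nf (.lift (.negdia α (hnf ψ hψ)))

theorem nfDefinable_sem_and_compl (φ : Form A P) {n : ℕ} (hφ : φ.deg ≤ n) :
    NFDefinable n (sem φ) ∧ NFDefinable n (sem φ)ᶜ := by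
  induction φ generalizing n with
  | prop p => exact ⟨.of_lit (.prop p) n, .of_lit (.negprop p) n⟩
  | sperm α => exact ⟨.of_lit (.sperm α) n, .of_lit (.negsperm α) n⟩
  | wperm α => exact ⟨.of_lit (.wperm α) n, .of_lit (.negwperm α) n⟩
  | eq α β =>
    rw [sem_eq, compl_inf, compl_compl]
    exact ⟨(NFDefinable.of_lit (.sperm _) n).inf (.of_lit (.negwperm _) n),
      (NFDefinable.of_lit (.negsperm _) n).sup (.of_lit (.wperm _) n)⟩
  | neg φ ih =>
    rw [sem_neg, compl_compl]
    exact (ih hφ).symm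
  | imp φ ψ ihφ ihψ =>
    obtain ⟨hφ₁, hφ₂⟩ := ihφ (le_of_max_le_left hφ)
    obtain ⟨hψ₁, hψ₂⟩ := ihψ (le_of_max_le_right hφ)
    rw [sem_imp, compl_sup, compl_compl]
    exact ⟨hφ₂.sup hψ₁, hφ₁.inf hψ₂⟩
  | box α φ ih =>
    replace hφ : φ.deg + 1 ≤ n := hφ
    obtain ⟨m, rfl⟩ : ∃ m, n = m + 1 := ⟨n - 1, by omega⟩
    obtain ⟨l, hne, hnf, hl⟩ := (ih (Nat.le_of_succ_le_succ hφ)).2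
    rw [sem_box_of_compl_eq hl, compl_compl]
    exact ⟨.compl_sem_dia_biSup hne hnf, .sem_dia_biSup hne hnf⟩

end DPL

/-- Fine-style normal form theorem for DPL: every formula `φ` of modal degree
`≤ n` either is unsatisfiable in every structure over every extension of the
vocabulary, or is equivalent, at every world of every structure over every
extension of the vocabulary, to a finite (nonempty) disjunction of normal form
formulae of degree `n`. -/
theorem normal_form_theorem {A P : Type} (φ : Form A P) (n : ℕ)
    (hdeg : φ.deg ≤ n) :
    (∀ (A' : Type) (f : A → A'), Function.Injective f →
        ∀ (M : DPLStruct A' P) (w : M.W), ¬ Sat M w (φ.map f)) ∨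
    (∃ l : List (Form A P), l ≠ [] ∧ (∀ ψ ∈ l, NF n ψ) ∧
      ∀ (A' : Type) (f : A → A'), Function.Injective f →
        ∀ (M : DPLStruct A' P) (w : M.W),
          Sat M w (φ.map f) ↔ Sat M w ((bigOr l).map f)) := by
  obtain ⟨l, hne, hnf, hl⟩ := (DPL.nfDefinable_sem_and_compl φ hdeg).1
  refine .inr ⟨l, hne, hnf, fun A' f _ M w => ?_⟩
  rw [← DPL.sem_bigOr] at hl
  exact iff_of_eq (congrFun (congrFun₃ hl A' f M) w)
end

section
/- Bounded out-degree model property: if a normal form formula φ is satisfied at world w of a DPL tree-structure M, then there exists a submodel M_w^φ of M (with same events, permissions and interpretation of primitives restricted appropriately) satisfying: (i) every world v of M_w^φ satisfies all formulae in L_w(v), (ii) w, M_w^φ ⊨ φ, and (iii) every world of M_w^φ has at most D_∃(φ) outgoing transitions. -/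
/-- `v` is reachable from `w` in exactly `k` steps. -/
def kReach {A P : Type} (M : DPLStruct A P) (w : M.W) (k : ℕ) (v : M.W) : Prop :=
  ∃ l : List (M.E × M.W), ReachPath M w v l ∧ l.length = k

/-- The labeling `L_w(v)`: the subformulae of `φ` at level `k ≤ d(φ)` that are
true at a world `v` reachable from `w` in `k` steps. -/
def Lbl {A P : Type} (M : DPLStruct A P) (φ : Form A P) (w v : M.W) :
    Set (Form A P) :=
  {ψ | ∃ k ≤ φ.deg, ψ ∈ SF φ k ∧ kReach M w k v ∧ Sat M v ψ}

/-- Restriction of a structure to a sub-relation of its transition relation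
(same worlds, events, permissions and interpretation). -/
def DPLStruct.restrict {A P : Type} (M : DPLStruct A P)
    (R' : M.W → M.W → M.E → Prop)
    (h : ∀ w w' e, R' w w' e → M.R w w' e) : DPLStruct A P :=
  { M with
    R := R'
    det := fun w w' w'' e h1 h2 => M.det w w' w'' e (h _ _ _ h1) (h _ _ _ h2) }


/-! In a tree every world has a well-defined depth. Pruning keeps, at each world `v`, one witness
for every diamond formula of `SF(φ, depth v)` true at `v`, so the out-degree is at most `D_∃(φ)`.
Truth passes from `M` to the pruned structure by induction on normal forms: diamonds survive because
their witnesses are kept, boxes because transitions are only removed. Below a negated diamond the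
levels `SF` record subformulae negated (`Form.simpNeg`), and there truth has to be transferred
backwards, from the pruned structure to `M`; so the induction carries the parity of the number of
such negations. -/

variable {A P : Type}

section Subformulae

theorem Form.dia_inj {α α' : ActTerm A} {ρ ρ' : Form A P} :
    Form.dia α ρ = Form.dia α' ρ' ↔ α = α' ∧ ρ = ρ' := by
  simp [Form.dia]

theorem Form.simpNeg_iterate_dia_of_even {s : ℕ} (hs : Even s) (α : ActTerm A) (ρ : Form A P) :
    Form.simpNeg^[s] (Form.dia α ρ) = Form.dia α ρ := by
  obtain ⟨k, rfl⟩ := hs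
  induction k with
  | zero => rfl
  | succ k ih =>
    rw [show k + 1 + (k + 1) = 2 + (k + k) by omega, Function.iterate_add_apply, ih]
    rfl

theorem Form.simpNeg_iterate_neg_dia_of_odd {s : ℕ} (hs : Odd s) (α : ActTerm A)
    (ρ : Form A P) :
    Form.simpNeg^[s] (Form.dia α ρ).neg = Form.dia α ρ := by
  obtain ⟨k, rfl⟩ := hs
  exact Form.simpNeg_iterate_dia_of_even (even_two_mul k) α ρ

theorem SF_and (φ ψ : Form A P) (k : ℕ) : SF (φ.and ψ) k = SF φ k ∪ SF ψ k := by
  cases k <;> rfl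

@[simp] theorem SF_dia_zero (α : ActTerm A) (ρ : Form A P) :
    SF (Form.dia α ρ) 0 = {Form.dia α ρ} := rfl

@[simp] theorem SF_dia_succ (α : ActTerm A) (ρ : Form A P) (k : ℕ) :
    SF (Form.dia α ρ) (k + 1) = SF ρ k := rfl

@[simp] theorem SF_neg_dia_zero (α : ActTerm A) (ρ : Form A P) :
    SF (Form.dia α ρ).neg 0 = {(Form.dia α ρ).neg} := rfl

@[simp] theorem SF_neg_dia_succ (α : ActTerm A) (ρ : Form A P) (k : ℕ) :
    SF (Form.dia α ρ).neg (k + 1) = Form.simpNeg '' SF ρ k := rfl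

theorem Lit0.SF_zero {l : Form A P} (hl : Lit0 l) : SF l 0 = {l} := by
  cases hl <;> rfl

theorem Lit0.SF_succ {l : Form A P} (hl : Lit0 l) (k : ℕ) : SF l (k + 1) = ∅ := by
  cases hl <;> rfl

theorem SF_finite (φ : Form A P) (k : ℕ) : (SF φ k).Finite := by
  induction φ, k using SF.induct <;> simp_all [SF]
  case case3 ih => exact ih.image _

theorem SF_eq_empty_of_deg_lt {φ : Form A P} {k : ℕ} (hk : φ.deg < k) : SF φ k = ∅ := by
  induction φ, k using SF.induct <;> simp_all [SF, Form.deg]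

theorem ncard_SF_existential_le_Dexists (φ : Form A P) (k : ℕ) :
    (SF φ k ∩ {ψ | Existential ψ}).ncard ≤ Dexists φ := by
  rcases le_or_gt k φ.deg with hk | hk
  · exact Finset.le_sup (f := fun k => (SF φ k ∩ {ψ | Existential ψ}).ncard)
      (Finset.mem_range.mpr (Nat.lt_succ_of_le hk))
  · simp [SF_eq_empty_of_deg_lt hk]

end Subformulae

section Satisfaction

variable {M : DPLStruct A P} {v : M.W}

theorem sat_and {φ ψ : Form A P} : Sat M v (φ.and ψ) ↔ Sat M v φ ∧ Sat M v ψ := by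
  simp only [Form.and, Sat, Classical.not_imp, not_not]

theorem sat_dia {α : ActTerm A} {ρ : Form A P} :
    Sat M v (Form.dia α ρ) ↔ ∃ e ∈ α.interp M, ∃ v', M.R v v' e ∧ Sat M v' ρ := by
  simp [Form.dia, Sat]

theorem sat_simpNeg (φ : Form A P) : Sat M v φ.simpNeg ↔ ¬Sat M v φ := by
  cases φ <;> simp [Form.simpNeg, Sat]

theorem sat_simpNeg_iterate (φ : Form A P) (t : ℕ) :
    Sat M v (Form.simpNeg^[t] φ) ↔ (Sat M v φ ↔ Even t) := by
  induction t with
  | zero => simp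
  | succ t ih =>
    rw [Function.iterate_succ_apply', sat_simpNeg, ih, Nat.even_add_one]
    tauto

theorem ActTerm.interp_restrict (R' : M.W → M.W → M.E → Prop)
    (hsub : ∀ v v' e, R' v v' e → M.R v v' e) (α : ActTerm A) :
    α.interp (M.restrict R' hsub) = α.interp M := by
  induction α <;> simp only [ActTerm.interp, *] <;> rfl

theorem NF0.sat_restrict_iff {R' : M.W → M.W → M.E → Prop}
    {hsub : ∀ v v' e, R' v v' e → M.R v v' e} {θ : Form A P} (hθ : NF0 θ) :
    Sat (M.restrict R' hsub) v θ ↔ Sat M v θ := by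
  induction hθ with
  | lit hl => cases hl <;> simp only [Sat, ActTerm.interp_restrict] <;> rfl
  | and _ _ ih₁ ih₂ => simp only [Form.and, Sat, ih₁, ih₂]

end Satisfaction

section Trees

variable {M : DPLStruct A P}

theorem ReachPath.snoc {u v v' : M.W} {e : M.E} {l : List (M.E × M.W)}
    (hl : ReachPath M u v l) (hR : M.R v v' e) : ReachPath M u v' (l ++ [(e, v')]) := by
  induction hl with
  | nil => exact .cons hR (.nil _)
  | cons hR₀ _ ih => exact .cons hR₀ (ih hR)

theorem kReach.succ {u v v' : M.W} {e : M.E} {k : ℕ} (h : kReach M u k v) (hR : M.R v v' e) :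
    kReach M u (k + 1) v' := by
  obtain ⟨l, hl, rfl⟩ := h
  exact ⟨_, hl.snoc hR, by simp⟩

namespace IsTreeRooted

variable {r : M.W} (htree : IsTreeRooted M r)

noncomputable def depth (v : M.W) : ℕ := (htree v).choose.length

theorem kReach_depth (v : M.W) : kReach M r (htree.depth v) v :=
  ⟨_, (htree v).choose_spec.1, rfl⟩

theorem eq_depth_of_kReach {k : ℕ} {v : M.W} (h : kReach M r k v) : k = htree.depth v := by
  obtain ⟨l, hl, rfl⟩ := h
  rw [(htree v).choose_spec.2 l hl, depth]

theorem depth_root : htree.depth r = 0 :=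
  (htree.eq_depth_of_kReach ⟨[], .nil r, rfl⟩).symm

theorem depth_of_R {v v' : M.W} {e : M.E} (hR : M.R v v' e) :
    htree.depth v' = htree.depth v + 1 :=
  (htree.eq_depth_of_kReach ((htree.kReach_depth v).succ hR)).symm

end IsTreeRooted

end Trees

section Occurrences

/-- `ψ` sits in `φ` at level `k`, below `t` negated diamonds. -/
def OccursAt (φ : Form A P) (t k : ℕ) (ψ : Form A P) : Prop :=
  ∀ j, Form.simpNeg^[t] '' SF ψ j ⊆ SF φ (k + j)

variable {φ : Form A P} {t k : ℕ}

theorem OccursAt.self : OccursAt φ 0 0 φ := by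
  simp [OccursAt]

theorem OccursAt.and_left {ψ₁ ψ₂ : Form A P} (h : OccursAt φ t k (ψ₁.and ψ₂)) :
    OccursAt φ t k ψ₁ := fun j => by
  grw [← h j, SF_and, Set.image_union]; exact Set.subset_union_left

theorem OccursAt.and_right {ψ₁ ψ₂ : Form A P} (h : OccursAt φ t k (ψ₁.and ψ₂)) :
    OccursAt φ t k ψ₂ := fun j => by
  grw [← h j, SF_and, Set.image_union]; exact Set.subset_union_right

theorem OccursAt.dia {α : ActTerm A} {ρ : Form A P} (h : OccursAt φ t k (Form.dia α ρ)) :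
    OccursAt φ t (k + 1) ρ := fun j => by
  rw [add_right_comm, ← SF_dia_succ α]
  exact h (j + 1)

theorem OccursAt.neg_dia {α : ActTerm A} {ρ : Form A P}
    (h : OccursAt φ t k (Form.dia α ρ).neg) :
    OccursAt φ (t + 1) (k + 1) ρ := fun j => by
  rw [Function.iterate_succ, Set.image_comp, add_right_comm, ← SF_neg_dia_succ α]
  exact h (j + 1)

theorem OccursAt.iterate_mem {ψ : Form A P} (h : OccursAt φ t k ψ) (hψ : ψ ∈ SF ψ 0) :
    Form.simpNeg^[t] ψ ∈ SF φ k :=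
  h 0 (Set.mem_image_of_mem _ hψ)

theorem NF0.exists_occursAt {θ : Form A P} (hθ : NF0 θ) {χ : Form A P} (j : ℕ)
    (hocc : OccursAt φ t k θ) (hχ : χ ∈ Form.simpNeg^[t] '' SF θ j) :
    ∃ l, Lit0 l ∧ OccursAt φ t (k + j) l ∧ χ = Form.simpNeg^[t] l := by
  induction hθ with
  | @lit l hl =>
    obtain ⟨x, hx, rfl⟩ := hχ
    cases j with
    | zero =>
      rw [hl.SF_zero, Set.mem_singleton_iff] at hx
      exact ⟨l, hl, hocc, hx ▸ rfl⟩
    | succ j => simp [hl.SF_succ] at hx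
  | and _ _ ih₁ ih₂ =>
    rw [SF_and, Set.image_union] at hχ
    exact hχ.elim (ih₁ hocc.and_left) (ih₂ hocc.and_right)

theorem NFAux.exists_occursAt {b : Bool} {m : ℕ} {ψ : Form A P} (hψ : NFAux b m ψ) :
    ∀ {t k : ℕ} {χ : Form A P} (j : ℕ), OccursAt φ t k ψ →
      χ ∈ Form.simpNeg^[t] '' SF ψ j → ∃ ψ' t', (∃ b' m', NFAux b' m' ψ') ∧
        OccursAt φ t' (k + j) ψ' ∧ χ = Form.simpNeg^[t'] ψ' := by
  induction hψ with
  | zero hθ =>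
    intro t k χ j hocc hχ
    obtain ⟨l, hl, hocc', rfl⟩ := hθ.exists_occursAt j hocc hχ
    exact ⟨l, t, ⟨false, 0, .zero (.lit hl)⟩, hocc', rfl⟩
  | dia α hρ ih =>
    intro t k χ j hocc hχ
    cases j with
    | zero => exact ⟨_, t, ⟨_, _, .dia α hρ⟩, hocc, by simpa [eq_comm] using hχ⟩
    | succ j => simpa [add_right_comm k 1 j, add_assoc] using ih j hocc.dia hχ
  | negdia α hρ ih =>
    intro t k χ j hocc hχ
    cases j with
    | zero => exact ⟨_, t, ⟨_, _, .negdia α hρ⟩, hocc, by simpa [eq_comm] using hχ⟩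
    | succ j =>
      rw [SF_neg_dia_succ, ← Set.image_comp, ← Function.iterate_succ] at hχ
      simpa [add_right_comm k 1 j, add_assoc] using ih j hocc.neg_dia hχ
  | conj _ _ ih₁ ih₂ =>
    intro t k χ j hocc hχ
    rw [SF_and, Set.image_union] at hχ
    exact hχ.elim (ih₁ j hocc.and_left) (ih₂ j hocc.and_right)
  | lift _ ih => exact ih
  | withTheta hθ _ ih =>
    intro t k χ j hocc hχ
    rw [SF_and, Set.image_union] at hχ
    refine hχ.elim (fun hχ => ?_) (ih j hocc.and_right)
    obtain ⟨l, hl, hocc', rfl⟩ := hθ.exists_occursAt j hocc.and_left hχ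
    exact ⟨l, t, ⟨false, 0, .zero (.lit hl)⟩, hocc', rfl⟩

end Occurrences

section Pruning

variable {M : DPLStruct A P}

theorem exists_dia_witness (v : M.W) (χ : Form A P) :
    ∃ p : M.E × M.W, ∀ α ρ, χ = Form.dia α ρ → Sat M v χ →
      M.R v p.2 p.1 ∧ p.1 ∈ α.interp M ∧ Sat M p.2 ρ := by
  by_cases h : ∃ α ρ, χ = Form.dia α ρ ∧ Sat M v χ
  · obtain ⟨α, ρ, rfl, hχ⟩ := h
    obtain ⟨e, he, v', hR, hρ⟩ := sat_dia.mp hχ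
    refine ⟨(e, v'), fun α' ρ' heq _ => ?_⟩
    obtain ⟨rfl, rfl⟩ := Form.dia_inj.mp heq
    exact ⟨hR, he, hρ⟩
  · push Not at h
    exact ⟨(M.nonemptyE.some, v), fun α ρ heq hχ => absurd hχ (h α ρ heq)⟩

def WitnessesDias (M : DPLStruct A P) (R' : M.W → M.W → M.E → Prop)
    (S : M.W → Set (Form A P)) : Prop :=
  ∀ v α ρ, Form.dia α ρ ∈ S v → Sat M v (Form.dia α ρ) →
    ∃ e ∈ α.interp M, ∃ v', R' v v' e ∧ Sat M v' ρ

theorem DPLStruct.exists_subrelation_witnessing (M : DPLStruct A P)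
    (S : M.W → Set (Form A P)) (hS : ∀ v, (S v).Finite) :
    ∃ R' : M.W → M.W → M.E → Prop, (∀ v v' e, R' v v' e → M.R v v' e) ∧
      WitnessesDias M R' S ∧
      ∀ v, {p : M.E × M.W | R' v p.2 p.1}.ncard ≤ (S v ∩ {ψ | Existential ψ}).ncard := by
  choose wit hwit using exists_dia_witness (M := M)
  let T v := {χ ∈ S v | ∃ α ρ, χ = Form.dia α ρ ∧ Sat M v χ}
  refine ⟨fun v v' e => (e, v') ∈ wit v '' T v, ?_, ?_, fun v => ?_⟩
  · rintro v v' e ⟨χ, ⟨-, α, ρ, rfl, hχ⟩, hw⟩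
    simpa [hw] using (hwit v _ α ρ rfl hχ).1
  · intro v α ρ hmem hχ
    obtain ⟨-, he, hρ⟩ := hwit v _ α ρ rfl hχ
    exact ⟨_, he, _, ⟨_, ⟨hmem, α, ρ, rfl, hχ⟩, rfl⟩, hρ⟩
  · have hT : T v ⊆ S v ∩ {ψ | Existential ψ} := by
      rintro _ ⟨hmem, α, ρ, rfl, -⟩
      exact ⟨hmem, .dia α ρ⟩
    calc {p : M.E × M.W | (p.1, p.2) ∈ wit v '' T v}.ncard
        = (wit v '' T v).ncard := rfl
      _ ≤ (T v).ncard := Set.ncard_image_le ((hS v).subset fun _ h => h.1)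
      _ ≤ (S v ∩ {ψ | Existential ψ}).ncard := Set.ncard_le_ncard hT ((hS v).inter_of_left _)

variable {R' : M.W → M.W → M.E → Prop} (hsub : ∀ v v' e, R' v v' e → M.R v v' e)

theorem sat_restrict_dia {S : M.W → Set (Form A P)} (hwit : WitnessesDias M R' S) {v : M.W}
    {α : ActTerm A} {ρ : Form A P} (hmem : Form.dia α ρ ∈ S v)
    (hρ : ∀ v' e, R' v v' e → Sat M v' ρ → Sat (M.restrict R' hsub) v' ρ)
    (hsat : Sat M v (Form.dia α ρ)) : Sat (M.restrict R' hsub) v (Form.dia α ρ) := by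
  obtain ⟨e, he, v', hR', hsatρ⟩ := hwit v α ρ hmem hsat
  refine sat_dia.mpr ⟨e, ?_, v', hR', hρ v' e hR' hsatρ⟩
  rwa [ActTerm.interp_restrict]

theorem sat_of_sat_restrict_dia {v : M.W} {α : ActTerm A} {ρ : Form A P}
    (hρ : ∀ v' e, R' v v' e → Sat (M.restrict R' hsub) v' ρ → Sat M v' ρ)
    (hsat : Sat (M.restrict R' hsub) v (Form.dia α ρ)) : Sat M v (Form.dia α ρ) := by
  obtain ⟨e, he, v', hR', hsatρ⟩ := sat_dia.mp hsat
  refine sat_dia.mpr ⟨e, ?_, v', hsub v v' e hR', hρ v' e hR' hsatρ⟩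
  rwa [ActTerm.interp_restrict] at he

variable {φ : Form A P} {lvl : M.W → ℕ}

theorem sat_restrict_of_occursAt (hlvl : ∀ v v' e, M.R v v' e → lvl v' = lvl v + 1)
    (hwit : WitnessesDias M R' fun v => SF φ (lvl v)) {b : Bool} {m : ℕ} {ψ : Form A P}
    (hψ : NFAux b m ψ) :
    ∀ {t : ℕ} {v : M.W}, OccursAt φ t (lvl v) ψ →
      (Even t → Sat M v ψ → Sat (M.restrict R' hsub) v ψ) ∧
      (Odd t → Sat (M.restrict R' hsub) v ψ → Sat M v ψ) := by
  induction hψ with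
  | zero hθ =>
    exact fun _ => ⟨fun _ => hθ.sat_restrict_iff.mpr, fun _ => hθ.sat_restrict_iff.mp⟩
  | dia _ _ ih =>
    intro t v hocc
    have ih' v' e (hR' : R' v v' e) := ih (hlvl v v' e (hsub v v' e hR') ▸ hocc.dia)
    refine ⟨fun ht => sat_restrict_dia hsub hwit ?_ fun v' e hR' => (ih' v' e hR').1 ht,
      fun ht => sat_of_sat_restrict_dia hsub fun v' e hR' => (ih' v' e hR').2 ht⟩
    simpa [Form.simpNeg_iterate_dia_of_even ht] using hocc.iterate_mem (by simp)
  | negdia _ _ ih =>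
    intro t v hocc
    have ih' v' e (hR' : R' v v' e) := ih (hlvl v v' e (hsub v v' e hR') ▸ hocc.neg_dia)
    refine ⟨fun ht => mt <| sat_of_sat_restrict_dia hsub fun v' e hR' =>
        (ih' v' e hR').2 ht.add_one,
      fun ht => mt <| sat_restrict_dia hsub hwit ?_ fun v' e hR' => (ih' v' e hR').1 ht.add_one⟩
    simpa [Form.simpNeg_iterate_neg_dia_of_odd ht] using hocc.iterate_mem (by simp)
  | conj _ _ ih₁ ih₂ =>
    intro t v hocc
    have h₁ := ih₁ hocc.and_left
    have h₂ := ih₂ hocc.and_right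
    exact ⟨fun ht hsat => sat_and.mpr ((sat_and.mp hsat).imp (h₁.1 ht) (h₂.1 ht)),
      fun ht hsat => sat_and.mpr ((sat_and.mp hsat).imp (h₁.2 ht) (h₂.2 ht))⟩
  | lift _ ih => exact ih
  | withTheta hθ _ ih =>
    intro t v hocc
    have h := ih hocc.and_right
    exact ⟨fun ht hsat => sat_and.mpr ((sat_and.mp hsat).imp hθ.sat_restrict_iff.mpr (h.1 ht)),
      fun ht hsat => sat_and.mpr ((sat_and.mp hsat).imp hθ.sat_restrict_iff.mp (h.2 ht))⟩

theorem sat_restrict_simpNeg_iterate_of_occursAt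
    (hlvl : ∀ v v' e, M.R v v' e → lvl v' = lvl v + 1)
    (hwit : WitnessesDias M R' fun v => SF φ (lvl v)) {b : Bool} {m t : ℕ} {ψ : Form A P}
    (hψ : NFAux b m ψ) {v : M.W} (hocc : OccursAt φ t (lvl v) ψ)
    (hsat : Sat M v (Form.simpNeg^[t] ψ)) :
    Sat (M.restrict R' hsub) v (Form.simpNeg^[t] ψ) := by
  have htransfer := sat_restrict_of_occursAt hsub hlvl hwit hψ hocc
  rw [sat_simpNeg_iterate] at hsat
  refine (sat_simpNeg_iterate (M := M.restrict R' hsub) ψ t).mpr ?_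
  rcases Nat.even_or_odd t with ht | ht
  · exact iff_of_true (htransfer.1 ht (hsat.mpr ht)) ht
  · have hnt := Nat.not_even_iff_odd.mpr ht
    exact iff_of_false (mt (htransfer.2 ht) (mt hsat.mp hnt)) hnt

theorem sat_restrict_of_mem_SF (hlvl : ∀ v v' e, M.R v v' e → lvl v' = lvl v + 1)
    (hwit : WitnessesDias M R' fun v => SF φ (lvl v)) {n : ℕ} (hφ : NF n φ) {v : M.W}
    {χ : Form A P} (hχ : χ ∈ SF φ (lvl v)) (hsat : Sat M v χ) :
    Sat (M.restrict R' hsub) v χ := by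
  obtain ⟨ψ, t, ⟨b, m, hψ⟩, hocc, rfl⟩ :=
    NFAux.exists_occursAt hφ (lvl v) OccursAt.self (by simpa using hχ)
  exact sat_restrict_simpNeg_iterate_of_occursAt hsub hlvl hwit hψ (by simpa using hocc) hsat

end Pruning

/-- Bounded out-degree model property: if a normal form formula `φ` is
satisfied at the root `w` of a tree-structure `M`, then some restriction
`M_w^φ` of `M` to a sub-relation of its transition relation satisfies:
(i) every world of `M_w^φ` (i.e. reachable in it from `w`) satisfies all
formulae of its label `L_w(v)`; (ii) `w, M_w^φ ⊨ φ`; and (iii) every world of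
`M_w^φ` has at most `D_∃(φ)` outgoing transitions. -/
theorem bounded_outdegree {A P : Type} (M : DPLStruct A P) (w : M.W)
    (φ : Form A P) (n : ℕ) (hnf : NF n φ) (htree : IsTreeRooted M w)
    (hsat : Sat M w φ) :
    ∃ (R' : M.W → M.W → M.E → Prop)
      (hsub : ∀ v v' e, R' v v' e → M.R v v' e),
      (∀ v : M.W, (∃ l, ReachPath (M.restrict R' hsub) w v l) →
          ∀ ψ ∈ Lbl M φ w v, Sat (M.restrict R' hsub) v ψ) ∧
      Sat (M.restrict R' hsub) w φ ∧
      (∀ v : M.W, ({p : M.E × M.W | R' v p.2 p.1}).ncard ≤ Dexists φ) := by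
  obtain ⟨R', hsub, hwit, hdeg⟩ :=
    M.exists_subrelation_witnessing (fun v => SF φ (htree.depth v)) fun v => SF_finite φ _
  have hlvl : ∀ v v' e, M.R v v' e → htree.depth v' = htree.depth v + 1 :=
    fun _ _ _ => htree.depth_of_R
  refine ⟨R', hsub, ?_, ?_, fun v => (hdeg v).trans (ncard_SF_existential_le_Dexists φ _)⟩
  · rintro v - ψ ⟨k, -, hψ, hk, hψsat⟩
    rw [htree.eq_depth_of_kReach hk] at hψ
    exact sat_restrict_of_mem_SF hsub hlvl hwit hnf hψ hψsat
  · have hocc : OccursAt φ 0 (htree.depth w) φ := by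
      rw [htree.depth_root]
      exact OccursAt.self
    exact sat_restrict_simpNeg_iterate_of_occursAt hsub hlvl hwit hnf hocc hsat
end

section
/- Local vs global validity: the formula [a ⊔ b]φ ↔ [U]φ is valid in every structure over the vocabulary with primitive actions exactly {a, b}, but there exists a structure over the vocabulary with primitive actions {a, b, c} and a world falsifying it. -/
/-! Over `{a, b}` condition I.3 forces every event to be an `a`- or a `b`-event, so `a ⊔ b` and
`U` denote the same event set and the two boxes agree. Over `{a, b, c}` a single `c`-step into a
world where `φ` fails refutes `[U]φ` while `[a ⊔ b]φ` holds vacuously. -/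

theorem sat_iff {A P : Type} (M : DPLStruct A P) (w : M.W) (φ ψ : Form A P) :
    Sat M w (φ.iff ψ) ↔ (Sat M w φ ↔ Sat M w ψ) := by
  simp only [Form.iff, Form.and, Sat]
  tauto

theorem sat_box_congr {A P : Type} (M : DPLStruct A P) (w : M.W) {α β : ActTerm A}
    (h : α.interp M = β.interp M) (φ : Form A P) :
    Sat M w (.box α φ) ↔ Sat M w (.box β φ) := by
  simp only [Sat, h]

theorem interp_join_prim_eq_univ {A P : Type} (M : DPLStruct A P) {a b : A}
    (hab : ∀ c, c = a ∨ c = b) :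
    (ActTerm.join (.prim a) (.prim b)).interp M = Set.univ := by
  rw [← M.I3, ActTerm.interp, ActTerm.interp, ActTerm.interp]
  ext e
  simp only [Set.mem_union, Set.mem_iUnion]
  constructor
  · rintro (he | he)
    exacts [⟨a, he⟩, ⟨b, he⟩]
  · rintro ⟨c, he⟩
    rcases hab c with rfl | rfl
    exacts [Or.inl he, Or.inr he]

abbrev DPLStruct.ofLabels {A P : Type} [Nonempty A] (W : Type) (R : W → W → A → Prop)
    (det : ∀ w w' w'' e, R w w' e → R w w'' e → w' = w'') (Iprop : P → Set W) :
    DPLStruct A P where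
  W := W
  E := A
  nonemptyE := inferInstance
  R := R
  det := det
  Perm _ _ := False
  Iprop := Iprop
  Iact a := {a}
  I1 _ := Set.subsingleton_singleton.anti Set.sdiff_subset
  I2 _ _ _ hab ha hb := absurd ((Set.mem_singleton_iff.mp ha).symm.trans hb) hab
  I3 := Set.eq_univ_of_forall fun e => Set.mem_iUnion.mpr ⟨e, rfl⟩

abbrev stepByTwo : DPLStruct (Fin 3) Unit :=
  .ofLabels (Fin 2) (fun w w' e => w = 0 ∧ w' = 1 ∧ e = 2)
    (by rintro w w' w'' e ⟨-, rfl, -⟩ ⟨-, rfl, -⟩; rfl) fun _ => {0}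

theorem stepByTwo_sat_box_join :
    Sat stepByTwo (0 : Fin 2) (.box (.join (.prim 0) (.prim 1)) (.prop ())) := by
  rintro e he w' ⟨-, -, rfl⟩
  simp only [ActTerm.interp, Set.mem_union, Set.mem_singleton_iff] at he
  exact absurd he (by decide)

theorem stepByTwo_not_sat_box_univ :
    ¬ Sat stepByTwo (0 : Fin 2) (.box .univ (.prop ())) := fun h =>
  absurd (h (2 : Fin 3) trivial (1 : Fin 2) ⟨rfl, rfl, rfl⟩) (by simp [Sat])

/-- Local vs. global validity: `[a ⊔ b]φ ↔ [U]φ` is valid in every structure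
over the vocabulary with primitive actions exactly `{a, b}`, but over the
vocabulary `{a, b, c}` there is a structure and a world falsifying (an
instance of) it. -/
theorem local_vs_global_validity :
    (∀ (P : Type) (φ : Form (Fin 2) P) (M : DPLStruct (Fin 2) P) (w : M.W),
      Sat M w (Form.iff (Form.box (.join (.prim 0) (.prim 1)) φ)
                        (Form.box .univ φ))) ∧
    (∃ (P : Type) (φ : Form (Fin 3) P) (M : DPLStruct (Fin 3) P) (w : M.W),
      ¬ Sat M w (Form.iff (Form.box (.join (.prim 0) (.prim 1)) φ)
                          (Form.box .univ φ))) := by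
  refine ⟨fun P φ M w => ?_, ⟨Unit, .prop (), stepByTwo, (0 : Fin 2), ?_⟩⟩
  · have hjoin : (ActTerm.join (.prim 0) (.prim 1)).interp M = ActTerm.univ.interp M :=
      interp_join_prim_eq_univ M (by decide)
    exact (sat_iff M w _ _).mpr (sat_box_congr M w hjoin φ)
  · rw [sat_iff]
    exact fun h => stepByTwo_not_sat_box_univ (h.mp stepByTwo_sat_box_join)
end
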